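/- arXiv:0811.1003 — 7 statements merged into one kernel-verified Lean document; each statement's English description precedes it below -/
import Mathlib

section
/- For every initial condition x₀ in the nonnegative orthant ℝ₊^{P(F)}, there exists a unique function x : [0,∞) → ℝ^{P(F)} with x(0) = x₀ and x'(t) = v(x(t)) for all t ≥ 0 (i.e., the fluid ODE ẋ = v(x) has a unique solution defined for all nonnegative times), and this solution takes values in the nonnegative orthant ℝ₊^{P(F)} for all t ≥ 0. -/
open Finset

/-- The fluid vector field `v` of the BitTorrent model, with components indexed by
subsets `A ⊆ F` (the full file `F` being `Finset.univ` of the chunk type `ι`). -/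
noncomputable def vfield {ι : Type*} [Fintype ι] [DecidableEq ι]
    (α : Finset ι → ℝ) (β γ δ : ℝ) (x : Finset ι → ℝ) (A : Finset ι) : ℝ :=
  α A
    - x A * (β * (∑ B ∈ univ.filter (fun B => A ⊂ B), x B)
             + γ * (∑ B ∈ univ.filter (fun B => ¬ A ⊆ B ∧ ¬ B ⊆ A), x B))
    + β * ∑ B ∈ univ.filter (fun B => A ⊆ B),
        (∑ a ∈ A, x (A.erase a)) * x B / (1 + ((B \ A).card : ℝ))
    + γ * ∑ B ∈ univ.filter (fun B => ¬ A ⊆ B),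
        (∑ a ∈ A ∩ B, x (A.erase a)) * x B / (1 + ((B \ A).card : ℝ))
    - δ * x univ * (if A = univ then 1 else 0)

/-!
The vector field is polynomial, hence locally Lipschitz, which gives uniqueness. It is
quasi-positive (`v^A(x) ≥ 0` whenever `x ≥ 0` and `x^A = 0`), so the nonnegative orthant is
invariant. The download and swap terms only move mass from `A \ {a}` to `A`, so the total mass
`∑_A x^A` has derivative `∑_A α^A - δ x^F ≤ ∑_A α^A` and grows at most linearly; on the orthant
it bounds every component, which rules out blow-up. Concretely, on `[0, T]` one solves the ODE
for `v` composed with the clamp onto a box `[0, R]^{P(F)}`, a globally Lipschitz and bounded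
field, and checks that the clamp is inactive along the solution once `R` is large.
-/

section ODE

variable {E : Type*} [NormedAddCommGroup E] [NormedSpace ℝ E]

theorem exists_forall_mem_Ioo_hasDerivAt_of_lipschitzWith_of_norm_le [CompleteSpace E]
    {v : E → E} {K : NNReal} (hK : LipschitzWith K v) {C : ℝ} (hC : ∀ x, ‖v x‖ ≤ C)
    (x₀ : E) {T : ℝ} (hT : 0 < T) :
    ∃ f : ℝ → E, f 0 = x₀ ∧ ∀ t ∈ Set.Ioo (-T) T, HasDerivAt f (v (f t)) t := by
  have hC0 : 0 ≤ C := (norm_nonneg _).trans (hC x₀)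
  have hpl : IsPicardLindelof (fun _ ↦ v) (⟨0, by constructor <;> linarith⟩ : Set.Icc (-T) T)
      x₀ (C * T).toNNReal 0 C.toNNReal K :=
    { lipschitzOnWith := fun _ _ ↦ hK.lipschitzOnWith
      continuousOn := fun _ _ ↦ continuousOn_const
      norm_le := fun _ _ x _ ↦ (hC x).trans (Real.le_coe_toNNReal C)
      mul_max_le := by
        simp [Real.coe_toNNReal _ hC0, Real.coe_toNNReal _ (mul_nonneg hC0 hT.le)] }
  obtain ⟨f, hf0, hf⟩ := hpl.exists_eq_forall_mem_Icc_hasDerivWithinAt₀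
  exact ⟨f, hf0, fun t ht ↦ (hf t (Set.mem_Icc_of_Ioo ht)).hasDerivAt (Icc_mem_nhds ht.1 ht.2)⟩

theorem eqOn_Icc_of_hasDerivAt_of_locallyLipschitz {v : E → E} (hv : LocallyLipschitz v)
    {u w : ℝ → E} {a b : ℝ} (hu : ∀ t ∈ Set.Icc a b, HasDerivAt u (v (u t)) t)
    (hw : ∀ t ∈ Set.Icc a b, HasDerivAt w (v (w t)) t) (ha : u a = w a) :
    Set.EqOn u w (Set.Icc a b) := by
  have hucont : ContinuousOn u (Set.Icc a b) := fun t ht ↦ (hu t ht).continuousAt.continuousWithinAt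
  have hwcont : ContinuousOn w (Set.Icc a b) := fun t ht ↦ (hw t ht).continuousAt.continuousWithinAt
  obtain ⟨K, hK⟩ := hv.locallyLipschitzOn.exists_lipschitzOnWith_of_compact
    ((isCompact_Icc.image_of_continuousOn hucont).union
      (isCompact_Icc.image_of_continuousOn hwcont))
  exact ODE_solution_unique_of_mem_Icc_right (v := fun _ ↦ v) (fun _ _ ↦ hK) hucont
    (fun t ht ↦ (hu t (Set.mem_Icc_of_Ico ht)).hasDerivWithinAt)
    (fun t ht ↦ Or.inl (Set.mem_image_of_mem u (Set.mem_Icc_of_Ico ht))) hwcont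
    (fun t ht ↦ (hw t (Set.mem_Icc_of_Ico ht)).hasDerivWithinAt)
    (fun t ht ↦ Or.inr (Set.mem_image_of_mem w (Set.mem_Icc_of_Ico ht))) ha

theorem exists_forall_hasDerivAt_of_forall_Icc {v : E → E} (hv : LocallyLipschitz v)
    {P : E → Prop} {x₀ : E}
    (hex : ∀ n : ℕ, ∃ f : ℝ → E, f 0 = x₀ ∧
      ∀ t ∈ Set.Icc (0 : ℝ) n, HasDerivAt f (v (f t)) t ∧ P (f t)) :
    ∃ x : ℝ → E, x 0 = x₀ ∧ ∀ t, 0 ≤ t → HasDerivAt x (v (x t)) t ∧ P (x t) := by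
  choose f hf0 hf using hex
  have hagree : ∀ m n : ℕ, ∀ t ∈ Set.Icc (0 : ℝ) m, t ≤ n → f m t = f n t := fun m n t ht htn ↦
    eqOn_Icc_of_hasDerivAt_of_locallyLipschitz hv
      (fun s hs ↦ (hf m s ⟨hs.1, hs.2.trans (min_le_left _ _)⟩).1)
      (fun s hs ↦ (hf n s ⟨hs.1, hs.2.trans (min_le_right _ _)⟩).1)
      (by rw [hf0, hf0]) ⟨ht.1, le_min ht.2 htn⟩
  set x : ℝ → E := fun t ↦ f (⌈t⌉₊ + 1) t
  have hceil : ∀ t : ℝ, 0 ≤ t → t ∈ Set.Icc (0 : ℝ) ↑(⌈t⌉₊ + 1) := fun t ht ↦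
    ⟨ht, by push_cast; linarith [Nat.le_ceil t]⟩
  have hev : ∀ t, 0 ≤ t → x =ᶠ[nhds t] f (⌈t⌉₊ + 1) := by
    intro t ht
    rcases ht.eq_or_lt with rfl | ht
    · filter_upwards [Iio_mem_nhds (zero_lt_one' ℝ)] with s hs
      rcases le_or_gt s 0 with hs0 | hs0
      · simp [x, Nat.ceil_eq_zero.2 hs0]
      · simpa using hagree _ 1 s (hceil s hs0.le) (by exact_mod_cast hs.le)
    · have htN : t < ↑(⌈t⌉₊ + 1) := by push_cast; linarith [Nat.le_ceil t]
      filter_upwards [Ioo_mem_nhds ht htN] with s hs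
      exact hagree _ _ s (hceil s hs.1.le) hs.2.le
  refine ⟨x, hf0 _, fun t ht ↦ ?_⟩
  rw [(hev t ht).eq_of_nhds]
  exact ⟨(hf _ t (hceil t ht)).1.congr_of_eventuallyEq (hev t ht), (hf _ t (hceil t ht)).2⟩

end ODE

theorem nonneg_of_hasDerivAt_of_nonpos_imp_deriv_nonneg {f f' : ℝ → ℝ} {a b : ℝ}
    (hf : ∀ t ∈ Set.Icc a b, HasDerivAt f (f' t) t) (ha : 0 ≤ f a)
    (hf' : ∀ t ∈ Set.Icc a b, f t ≤ 0 → 0 ≤ f' t) : ∀ t ∈ Set.Icc a b, 0 ≤ f t := by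
  -- fence `-f` by `ε (1 + (t - a))`: at a contact point `f < 0`, so `-f' ≤ 0 < ε`
  have hfence : ∀ ε > 0, ∀ t ∈ Set.Icc a b, -f t ≤ ε * (1 + (t - a)) := by
    intro ε hε
    have hB : ∀ t, HasDerivAt (fun s ↦ ε * (1 + (s - a))) ε t := fun t ↦ by
      simpa using (((hasDerivAt_id t).sub_const a).const_add 1).const_mul ε
    refine image_le_of_deriv_right_lt_deriv_boundary'
      (fun t ht ↦ (hf t ht).neg.continuousAt.continuousWithinAt)
      (fun t ht ↦ (hf t (Set.mem_Icc_of_Ico ht)).neg.hasDerivWithinAt) (by simp; linarith)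
      (fun t _ ↦ (hB t).continuousAt.continuousWithinAt) (fun t _ ↦ (hB t).hasDerivWithinAt) ?_
    intro t ht hcontact
    rw [Pi.neg_apply] at hcontact
    have : f t ≤ 0 := by nlinarith [ht.1]
    linarith [hf' t (Set.mem_Icc_of_Ico ht) this]
  refine fun t ht ↦ le_of_not_gt fun hneg ↦ ?_
  have hc : 0 < 1 + (t - a) := by linarith [ht.1]
  have := hfence (-f t / (2 * (1 + (t - a)))) (div_pos (by linarith) (by positivity)) t ht
  rw [div_mul_eq_mul_div, mul_comm 2, ← div_div, mul_div_cancel_right₀ _ hc.ne'] at this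
  linarith

section Clamp

variable {σ : Type*}

noncomputable def clampBox (R : ℝ) (x : σ → ℝ) : σ → ℝ := fun i ↦ max 0 (min R (x i))

theorem lipschitzWith_clampBox [Fintype σ] (R : ℝ) : LipschitzWith 1 (clampBox (σ := σ) R) :=
  LipschitzWith.of_dist_le_mul fun x y ↦ by
    rw [NNReal.coe_one, one_mul, dist_pi_le_iff dist_nonneg]
    exact fun i ↦ ((((LipschitzWith.eval i).const_min R).const_max 0).dist_le_mul x y).trans_eq
      (one_mul _)

theorem clampBox_nonneg (R : ℝ) (x : σ → ℝ) (i : σ) : 0 ≤ clampBox R x i :=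
  le_max_left _ _

theorem clampBox_eq_zero_of_nonpos (R : ℝ) {x : σ → ℝ} {i : σ} (h : x i ≤ 0) :
    clampBox R x i = 0 :=
  max_eq_left ((min_le_right _ _).trans h)

theorem clampBox_mem_closedBall [Fintype σ] {R : ℝ} (hR : 0 ≤ R) (x : σ → ℝ) :
    clampBox R x ∈ Metric.closedBall 0 R := by
  rw [mem_closedBall_zero_iff, pi_norm_le_iff_of_nonneg hR]
  exact fun i ↦ by
    rw [Real.norm_of_nonneg (clampBox_nonneg R x i)]
    exact max_le hR (min_le_left _ _)

theorem clampBox_eq_self {R : ℝ} {x : σ → ℝ} (h : ∀ i, 0 ≤ x i ∧ x i ≤ R) : clampBox R x = x :=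
  funext fun i ↦ by rw [clampBox, min_eq_right (h i).2, max_eq_right (h i).1]

theorem LocallyLipschitz.exists_forall_mem_Ioo_hasDerivAt_comp_clampBox [Fintype σ]
    {v : (σ → ℝ) → (σ → ℝ)} (hv : LocallyLipschitz v) {R : ℝ} (hR : 0 ≤ R) (x₀ : σ → ℝ)
    {T : ℝ} (hT : 0 < T) :
    ∃ f : ℝ → σ → ℝ, f 0 = x₀ ∧
      ∀ t ∈ Set.Ioo (-T) T, HasDerivAt f (v (clampBox R (f t))) t := by
  obtain ⟨K, hK⟩ := hv.locallyLipschitzOn.exists_lipschitzOnWith_of_compact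
    (isCompact_closedBall (0 : σ → ℝ) R)
  obtain ⟨C, hC⟩ := (isCompact_closedBall (0 : σ → ℝ) R).exists_bound_of_continuousOn
    hv.continuous.continuousOn
  have hlip : LipschitzWith (K * 1) (v ∘ clampBox R) := lipschitzOnWith_univ.1 <|
    hK.comp (lipschitzWith_clampBox R).lipschitzOnWith
      fun x _ ↦ clampBox_mem_closedBall hR x
  exact exists_forall_mem_Ioo_hasDerivAt_of_lipschitzWith_of_norm_le hlip
    (fun x ↦ hC _ (clampBox_mem_closedBall hR x)) x₀ hT

end Clamp

section Fluid

variable {ι : Type*} [Fintype ι] [DecidableEq ι]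

theorem contDiff_vfield (α : Finset ι → ℝ) (β γ δ : ℝ) : ContDiff ℝ 1 (vfield α β γ δ) := by
  unfold vfield
  exact contDiff_pi.2 fun A ↦ by fun_prop

theorem sum_sum_inter_erase_eq_sum_sum_sdiff {M : Type*} [AddCommMonoid M] (B : Finset ι)
    (f : Finset ι → ι → M) :
    ∑ A, ∑ a ∈ A ∩ B, f (A.erase a) a = ∑ C, ∑ a ∈ B \ C, f C a := by
  rw [sum_sigma', sum_sigma']
  refine sum_nbij' (fun p ↦ ⟨p.1.erase p.2, p.2⟩) (fun p ↦ ⟨insert p.2 p.1, p.2⟩)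
    ?_ ?_ ?_ ?_ fun _ _ ↦ rfl
  all_goals
    rintro ⟨A, a⟩ h
    simp only [mem_sigma, mem_univ, true_and, mem_inter, mem_sdiff] at h ⊢
  · exact ⟨h.2, notMem_erase _ _⟩
  · simp [h.1]
  · simp [insert_erase h.1]
  · simp [erase_insert h.2]

theorem sum_sum_filter_transfer (p : Finset ι → Finset ι → Prop) [DecidableRel p]
    (hp : ∀ C B a, a ∈ B → a ∉ C → (p (insert a C) B ↔ p C B)) (y : Finset ι → ℝ) :
    ∑ A, ∑ B ∈ univ.filter (p A), (∑ a ∈ A ∩ B, y (A.erase a)) * y B / (1 + #(B \ A))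
      = ∑ A, y A * ∑ B ∈ univ.filter (fun B ↦ p A B ∧ ¬ B ⊆ A), y B := by
  simp only [sum_filter, mul_sum, mul_ite, mul_zero]
  rw [sum_comm]
  conv_rhs => rw [sum_comm]
  refine sum_congr rfl fun B _ ↦ ?_
  -- the term of `(A, a)` only depends on `C = A.erase a`, and `#(B \ C) = 1 + #(B \ A)`
  let g C := if p C B then y C * y B / #(B \ C) else 0
  have hterm : ∀ A, (if p A B then (∑ a ∈ A ∩ B, y (A.erase a)) * y B / (1 + #(B \ A)) else 0)
      = ∑ a ∈ A ∩ B, g (A.erase a) := fun A ↦ by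
    have herase : ∀ a ∈ A ∩ B,
        (p (A.erase a) B ↔ p A B) ∧ (#(B \ A.erase a) : ℝ) = 1 + #(B \ A) := fun a ha ↦ by
      rw [mem_inter] at ha
      refine ⟨?_, ?_⟩
      · simpa [insert_erase ha.1] using (hp (A.erase a) B a ha.2 (notMem_erase a A)).symm
      · rw [sdiff_erase ha.2, card_insert_of_notMem fun h ↦ (mem_sdiff.1 h).2 ha.1]
        push_cast; ring
    split_ifs with h
    · rw [sum_mul, sum_div]
      exact sum_congr rfl fun a ha ↦ by simp [g, herase a ha, h]
    · exact (sum_eq_zero fun a ha ↦ by simp [g, herase a ha, h]).symm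
  have hcount : ∀ C, ∑ _a ∈ B \ C, g C = if p C B ∧ ¬ B ⊆ C then y C * y B else 0 := fun C ↦ by
    rw [sum_const, nsmul_eq_mul]
    by_cases hBC : B ⊆ C
    · simp [sdiff_eq_empty_iff_subset.2 hBC, hBC]
    · have hcard : (#(B \ C) : ℝ) ≠ 0 := by exact_mod_cast (sdiff_nonempty.2 hBC).card_pos.ne'
      by_cases hpC : p C B <;> simp [g, hpC, hBC, mul_div_cancel₀ _ hcard]
  rw [sum_congr rfl fun A _ ↦ hterm A, sum_sum_inter_erase_eq_sum_sum_sdiff B fun C _ ↦ g C]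
  exact sum_congr rfl fun C _ ↦ hcount C

theorem sum_vfield (α : Finset ι → ℝ) (β γ δ : ℝ) (y : Finset ι → ℝ) :
    ∑ A, vfield α β γ δ y A = ∑ A, α A - δ * y univ := by
  have hinsert : ∀ (C B : Finset ι) (a : ι), a ∈ B → a ∉ C → (insert a C ⊆ B ↔ C ⊆ B) :=
    fun C B a ha _ ↦ by simp [insert_subset_iff, ha]
  have hdownload : ∑ A : Finset ι, ∑ B ∈ univ.filter (A ⊆ ·),
        (∑ a ∈ A, y (A.erase a)) * y B / (1 + #(B \ A))
      = ∑ A, y A * ∑ B ∈ univ.filter (A ⊂ ·), y B := by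
    convert sum_sum_filter_transfer (· ⊆ ·) hinsert y using 3 with A _ B hB
    · rw [inter_eq_left.2 (mem_filter.1 hB).2]
    · simp_rw [ssubset_iff_subset_not_subset]
  have hswap := sum_sum_filter_transfer (fun A B ↦ ¬ A ⊆ B)
    (fun C B a ha haC ↦ not_congr (hinsert C B a ha haC)) y
  simp only [vfield, sum_sub_distrib, sum_add_distrib, ← mul_sum]
  rw [hdownload, hswap, sum_ite_eq' univ univ, if_pos (mem_univ _)]
  simp only [mul_add, sum_add_distrib, mul_left_comm (y _), ← mul_sum]
  ring

theorem vfield_nonneg_of_eq_zero {α : Finset ι → ℝ} (hα : ∀ A, 0 ≤ α A) {β γ : ℝ}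
    (hβ : 0 ≤ β) (hγ : 0 ≤ γ) (δ : ℝ) {y : Finset ι → ℝ} (hy : ∀ B, 0 ≤ y B) {A : Finset ι}
    (hyA : y A = 0) : 0 ≤ vfield α β γ δ y A := by
  have hinflow : ∀ (p : Finset ι → Prop) [DecidablePred p] (s : Finset ι → Finset ι),
      0 ≤ ∑ B ∈ univ.filter p, (∑ a ∈ s B, y (A.erase a)) * y B / (1 + #(B \ A)) :=
    fun p _ s ↦ sum_nonneg fun B _ ↦
      div_nonneg (mul_nonneg (sum_nonneg fun a _ ↦ hy _) (hy B)) (by positivity)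
  have hdeparture : δ * y univ * (if A = univ then 1 else 0) = 0 := by
    split_ifs with h
    · rw [← h, hyA, mul_zero, zero_mul]
    · rw [mul_zero]
  rw [vfield, hyA, zero_mul, sub_zero, hdeparture, sub_zero]
  exact add_nonneg (add_nonneg (hα A) (mul_nonneg hβ (hinflow _ fun _ ↦ A)))
    (mul_nonneg hγ (hinflow _ (A ∩ ·)))

variable {α : Finset ι → ℝ} {β γ δ R : ℝ}

theorem nonneg_of_hasDerivAt_vfield_comp_clampBox (hα : ∀ A, 0 ≤ α A) (hβ : 0 ≤ β)
    (hγ : 0 ≤ γ) {f : ℝ → Finset ι → ℝ} {T : ℝ}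
    (hf : ∀ t ∈ Set.Icc 0 T, HasDerivAt f (vfield α β γ δ (clampBox R (f t))) t)
    (h0 : ∀ A, 0 ≤ f 0 A) : ∀ t ∈ Set.Icc 0 T, ∀ A, 0 ≤ f t A := fun t ht A ↦
  nonneg_of_hasDerivAt_of_nonpos_imp_deriv_nonneg (fun s hs ↦ hasDerivAt_pi.1 (hf s hs) A)
    (h0 A) (fun _ _ hA ↦ vfield_nonneg_of_eq_zero hα hβ hγ δ (clampBox_nonneg R _)
      (clampBox_eq_zero_of_nonpos R hA)) t ht

theorem sum_le_of_hasDerivAt_vfield_comp_clampBox (hδ : 0 ≤ δ) {f : ℝ → Finset ι → ℝ} {T : ℝ}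
    (hf : ∀ t ∈ Set.Icc 0 T, HasDerivAt f (vfield α β γ δ (clampBox R (f t))) t) :
    ∀ t ∈ Set.Icc 0 T, ∑ A, f t A ≤ ∑ A, f 0 A + (∑ A, α A) * t := by
  have hsum : ∀ t ∈ Set.Icc 0 T, HasDerivAt (fun s ↦ ∑ A, f s A)
      (∑ A, α A - δ * clampBox R (f t) univ) t := fun t ht ↦ by
    rw [← sum_vfield]
    exact HasDerivAt.fun_sum fun A _ ↦ hasDerivAt_pi.1 (hf t ht) A
  have hline : ∀ t, HasDerivAt (fun s ↦ ∑ A, f 0 A + (∑ A, α A) * s) (∑ A, α A) t := fun t ↦ by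
    simpa using ((hasDerivAt_id t).const_mul (∑ A, α A)).const_add (∑ A, f 0 A)
  refine image_le_of_deriv_right_le_deriv_boundary
    (fun t ht ↦ (hsum t ht).continuousAt.continuousWithinAt)
    (fun t ht ↦ (hsum t (Set.mem_Icc_of_Ico ht)).hasDerivWithinAt) (by simp)
    (fun t _ ↦ (hline t).continuousAt.continuousWithinAt) (fun t _ ↦ (hline t).hasDerivWithinAt)
    fun t _ ↦ sub_le_self _ (mul_nonneg hδ (clampBox_nonneg R _ _))

theorem exists_vfield_solution_Icc_nonneg (hα : ∀ A, 0 ≤ α A) (hβ : 0 ≤ β) (hγ : 0 ≤ γ)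
    (hδ : 0 ≤ δ) {x₀ : Finset ι → ℝ} (hx₀ : ∀ A, 0 ≤ x₀ A) {T : ℝ} (hT : 0 ≤ T) :
    ∃ f : ℝ → Finset ι → ℝ, f 0 = x₀ ∧
      ∀ t ∈ Set.Icc 0 T, HasDerivAt f (vfield α β γ δ (f t)) t ∧ ∀ A, 0 ≤ f t A := by
  -- on the orthant each component is bounded by the total mass, which is `≤ R` up to time `T`
  set R := ∑ A, x₀ A + (∑ A, α A) * T
  have hR : 0 ≤ R := add_nonneg (sum_nonneg fun A _ ↦ hx₀ A)
    (mul_nonneg (sum_nonneg fun A _ ↦ hα A) hT)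
  obtain ⟨f, hf0, hf⟩ := (contDiff_vfield α β γ δ).locallyLipschitz
    |>.exists_forall_mem_Ioo_hasDerivAt_comp_clampBox hR x₀ (by linarith : 0 < T + 1)
  have hfIcc : ∀ t ∈ Set.Icc 0 T, HasDerivAt f (vfield α β γ δ (clampBox R (f t))) t :=
    fun t ht ↦ hf t ⟨by linarith [ht.1], by linarith [ht.2]⟩
  have hnonneg := nonneg_of_hasDerivAt_vfield_comp_clampBox hα hβ hγ hfIcc (hf0 ▸ hx₀)
  have hmass := sum_le_of_hasDerivAt_vfield_comp_clampBox hδ hfIcc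
  have hclamp : ∀ t ∈ Set.Icc 0 T, clampBox R (f t) = f t := fun t ht ↦
    clampBox_eq_self fun A ↦ ⟨hnonneg t ht A, calc
      f t A ≤ ∑ B, f t B := single_le_sum (fun B _ ↦ hnonneg t ht B) (mem_univ A)
      _ ≤ ∑ B, f 0 B + (∑ B, α B) * t := hmass t ht
      _ ≤ ∑ B, x₀ B + (∑ B, α B) * T := by
        rw [hf0]
        gcongr
        exacts [sum_nonneg fun B _ ↦ hα B, ht.2]⟩
  exact ⟨f, hf0, fun t ht ↦ ⟨hclamp t ht ▸ hfIcc t ht, hnonneg t ht⟩⟩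

end Fluid

theorem fluid_ode_global_wellposed_nonneg_general
    {ι : Type*} [Fintype ι] [DecidableEq ι]
    (α : Finset ι → ℝ) (hα : ∀ A, 0 ≤ α A)
    (β γ δ : ℝ) (hβ : 0 < β) (hγ : 0 ≤ γ) (hδ : 0 ≤ δ)
    (x₀ : Finset ι → ℝ) (hx₀ : ∀ A, 0 ≤ x₀ A) :
    ∃ x : ℝ → Finset ι → ℝ,
      (x 0 = x₀ ∧ ∀ t : ℝ, 0 ≤ t → HasDerivAt x (vfield α β γ δ (x t)) t) ∧
      (∀ y : ℝ → Finset ι → ℝ,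
          (y 0 = x₀ ∧ ∀ t : ℝ, 0 ≤ t → HasDerivAt y (vfield α β γ δ (y t)) t) →
          ∀ t : ℝ, 0 ≤ t → y t = x t) ∧
      (∀ t : ℝ, 0 ≤ t → ∀ A : Finset ι, 0 ≤ x t A) := by
  have hv := (contDiff_vfield α β γ δ).locallyLipschitz
  obtain ⟨x, hx0, hx⟩ := exists_forall_hasDerivAt_of_forall_Icc hv
    (P := fun y ↦ ∀ A, 0 ≤ y A) fun n ↦
      exists_vfield_solution_Icc_nonneg hα hβ.le hγ hδ hx₀ n.cast_nonneg
  refine ⟨x, ⟨hx0, fun t ht ↦ (hx t ht).1⟩, fun y ⟨hy0, hy⟩ t ht ↦ ?_, fun t ht ↦ (hx t ht).2⟩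
  exact eqOn_Icc_of_hasDerivAt_of_locallyLipschitz hv (fun s hs ↦ hy s hs.1)
    (fun s hs ↦ (hx s hs.1).1) (hy0.trans hx0.symm) ⟨ht, le_rfl⟩

/-- The fluid ODE `ẋ = v(x)` has a unique solution for all `t ≥ 0` starting from any
point `x₀` of the nonnegative orthant, and this solution stays in the nonnegative orthant. -/
theorem fluid_ode_global_wellposed_nonneg
    {ι : Type*} [Fintype ι] [Nonempty ι] [DecidableEq ι]
    (α : Finset ι → ℝ) (hα : ∀ A, 0 ≤ α A)
    (β γ δ : ℝ) (hβ : 0 < β) (hγ : 0 ≤ γ) (hδ : 0 ≤ δ)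
    (x₀ : Finset ι → ℝ) (hx₀ : ∀ A, 0 ≤ x₀ A) :
    ∃ x : ℝ → Finset ι → ℝ,
      (x 0 = x₀ ∧ ∀ t : ℝ, 0 ≤ t → HasDerivAt x (vfield α β γ δ (x t)) t) ∧
      (∀ y : ℝ → Finset ι → ℝ,
          (y 0 = x₀ ∧ ∀ t : ℝ, 0 ≤ t → HasDerivAt y (vfield α β γ δ (y t)) t) →
          ∀ t : ℝ, 0 ≤ t → y t = x t) ∧
      (∀ t : ℝ, 0 ≤ t → ∀ A : Finset ι, 0 ≤ x t A) :=
  fluid_ode_global_wellposed_nonneg_general α hα β γ δ hβ hγ hδ x₀ hx₀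
end

section
/- For every x ∈ ℝ^{P(F)}, the sum of the components of the fluid vector field satisfies Σ_{A ⊆ F} v^A(x) = Σ_{A ⊆ F} α^A − δ x^F. -/
/-!
A peer of class `A = insert a C` (with `a ∉ C`) is created when a peer of class `C` obtains
chunk `a` from a peer of class `B`. Since `1 + |B \ A| = |B \ C|`, the chunk is chosen
uniformly among the `|B \ C|` chunks that `B` can offer, so summing the gain terms over
`a ∈ B \ C` returns exactly the rate `x^C x^B` at which `C` leaves its class through a meeting
with `B`. Gains and losses thus cancel in the total, for downloads and swaps alike, leaving
only arrivals and departures.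
-/

open Finset

namespace Finset

variable {ι : Type*} [DecidableEq ι]

theorem sum_sum_inter_eq_sum_sum_sdiff_insert [Fintype ι] {M : Type*} [AddCommMonoid M]
    (S : Finset ι) (f : Finset ι → ι → M) :
    ∑ A : Finset ι, ∑ a ∈ A ∩ S, f A a = ∑ C : Finset ι, ∑ a ∈ S \ C, f (insert a C) a := by
  rw [sum_sigma', sum_sigma']
  refine sum_nbij' (fun p => ⟨p.1.erase p.2, p.2⟩) (fun p => ⟨insert p.2 p.1, p.2⟩)
    ?_ ?_ ?_ ?_ ?_ <;> rintro ⟨A, a⟩ h <;> simp_all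

theorem sum_div_one_add_card_sdiff_insert (B C : Finset ι) (g : ℝ) :
    ∑ a ∈ B \ C, g / (1 + #(B \ insert a C) : ℝ) = if B ⊆ C then 0 else g := by
  have hterm : ∀ a ∈ B \ C, g / (1 + #(B \ insert a C) : ℝ) = g / #(B \ C) := by
    intro a ha
    rw [sdiff_insert, ← Nat.cast_one, ← Nat.cast_add, add_comm, card_erase_add_one ha]
  rw [sum_congr rfl hterm, sum_const, nsmul_eq_mul]
  split_ifs with hBC
  · simp [sdiff_eq_empty_iff_subset.2 hBC]
  · have : (#(B \ C) : ℝ) ≠ 0 := by simpa [sdiff_eq_empty_iff_subset] using hBC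
    field_simp

end Finset

section Gain

variable {ι : Type*} [Fintype ι] [DecidableEq ι]

theorem sum_gain_eq_sum_loss (p : Finset ι → Finset ι → Prop) [∀ A, DecidablePred (p A)]
    (hp : ∀ a C B, a ∈ B → a ∉ C → (p (insert a C) B ↔ p C B)) (x : Finset ι → ℝ) :
    ∑ A : Finset ι, ∑ B ∈ univ.filter (p A),
        (∑ a ∈ A ∩ B, x (A.erase a)) * x B / (1 + #(B \ A) : ℝ)
      = ∑ A : Finset ι, x A * ∑ B ∈ univ.filter (fun B => p A B ∧ ¬ B ⊆ A), x B := by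
  calc _ = ∑ B : Finset ι, ∑ A : Finset ι, ∑ a ∈ A ∩ B,
          if p A B then x (A.erase a) * x B / (1 + #(B \ A) : ℝ) else 0 := by
        rw [← sum_comm]
        refine sum_congr rfl fun A _ => ?_
        rw [sum_filter]
        refine sum_congr rfl fun B _ => ?_
        split_ifs <;> simp [sum_mul, sum_div]
    _ = ∑ B : Finset ι, ∑ C : Finset ι, if p C B then
          ∑ a ∈ B \ C, x C * x B / (1 + #(B \ insert a C) : ℝ) else 0 := by
        refine sum_congr rfl fun B _ => ?_
        rw [sum_sum_inter_eq_sum_sum_sdiff_insert]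
        refine sum_congr rfl fun C _ => ?_
        rw [ite_sum_zero]
        refine sum_congr rfl fun a ha => ?_
        obtain ⟨haB, haC⟩ := mem_sdiff.1 ha
        simp only [hp a C B haB haC, erase_insert haC]
    _ = ∑ B : Finset ι, ∑ C : Finset ι, if p C B ∧ ¬ B ⊆ C then x C * x B else 0 := by
        simp only [sum_div_one_add_card_sdiff_insert, ite_and, ite_not]
    _ = _ := by
        rw [sum_comm]
        simp only [mul_sum, sum_filter, mul_ite, mul_zero]

theorem sum_download_gain_eq (x : Finset ι → ℝ) :
    ∑ A : Finset ι, ∑ B ∈ univ.filter (fun B => A ⊆ B),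
        (∑ a ∈ A, x (A.erase a)) * x B / (1 + #(B \ A) : ℝ)
      = ∑ A : Finset ι, x A * ∑ B ∈ univ.filter (fun B => A ⊂ B), x B := by
  have hgain := sum_gain_eq_sum_loss (fun A B => A ⊆ B)
    (fun a C B haB _ => by simp [insert_subset_iff, haB]) x
  simp only [← ssubset_def] at hgain
  rw [← hgain]
  refine sum_congr rfl fun A _ => sum_congr rfl fun B hB => ?_
  rw [inter_eq_left.2 (mem_filter.1 hB).2]

theorem sum_swap_gain_eq (x : Finset ι → ℝ) :
    ∑ A : Finset ι, ∑ B ∈ univ.filter (fun B => ¬ A ⊆ B),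
        (∑ a ∈ A ∩ B, x (A.erase a)) * x B / (1 + #(B \ A) : ℝ)
      = ∑ A : Finset ι, x A * ∑ B ∈ univ.filter (fun B => ¬ A ⊆ B ∧ ¬ B ⊆ A), x B :=
  sum_gain_eq_sum_loss (fun A B => ¬ A ⊆ B)
    (fun a C B haB _ => by simp [insert_subset_iff, haB]) x

end Gain

theorem sum_vfield_eq_general
    {ι : Type*} [Fintype ι] [DecidableEq ι]
    (α : Finset ι → ℝ)
    (β γ δ : ℝ)
    (x : Finset ι → ℝ) :
    ∑ A : Finset ι, vfield α β γ δ x A = (∑ A : Finset ι, α A) - δ * x univ := by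
  simp only [vfield, sum_add_distrib, sum_sub_distrib, mul_add, ← mul_sum, mul_left_comm (x _),
    sum_download_gain_eq, sum_swap_gain_eq]
  rw [Fintype.sum_ite_eq']
  ring

/-- The sum of the components of the fluid vector field equals the total arrival
rate minus the departure term: `Σ_A v^A(x) = Σ_A α^A − δ x^F`. -/
theorem sum_vfield_eq
    {ι : Type*} [Fintype ι] [Nonempty ι] [DecidableEq ι]
    (α : Finset ι → ℝ) (hα : ∀ A, 0 ≤ α A)
    (β γ δ : ℝ) (hβ : 0 < β) (hγ : 0 ≤ γ) (hδ : 0 ≤ δ)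
    (x : Finset ι → ℝ) :
    ∑ A : Finset ι, vfield α β γ δ x A = (∑ A : Finset ι, α A) - δ * x univ :=
  sum_vfield_eq_general α β γ δ x
end

section
/- For every x ∈ ℝ^{P(F)} and every G ⊆ F, the drift of the BitTorrent Markov chain equals the fluid vector field: α^G − δ x^F 1(G = F) − Σ_{A' ⊆ F} λ_{G,A'}(x) + Σ_{A ⊆ F} λ_{A,G}(x) − Σ_{A',B,B' ⊆ F} μ_{G,B}(x) D(G,A',B,B') + Σ_{A,B,B' ⊆ F} μ_{A,B}(x) D(A,G,B,B') = v^G(x). -/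
/-! The covers of `G` are enumerated explicitly: the sets `A'` with `G ⋖ A'` are the `insert a G`
with `a ∉ G`, and those with `A ⋖ G` are the `G.erase a` with `a ∈ G`. The denominators of `λ`
and `μ` count exactly these covers: a set `C ⊋ G` lies above `|C \ G|` covers of `G`, and a swap
between `A ≁ B` is realised by `|A \ B| · |B \ A|` pairs `(A', B')` with `D(A, A', B, B') = 1`.
So the two outflow terms collapse to `β x^G φ_d^G` and `γ x^G φ_s^G`, while in the inflow terms
`|C \ (G \ {a})| = 1 + |C \ G|` produces the denominators `1 + |B \ A|` of `v`. -/

open Finset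

/-- Download rate `λ_{A,A'}(x)`: nonzero only when `A ⊏ A'` (i.e. `A ⊆ A'` with
`|A' \ A| = 1`). -/
noncomputable def lam {ι : Type*} [Fintype ι] [DecidableEq ι]
    (β : ℝ) (x : Finset ι → ℝ) (A A' : Finset ι) : ℝ :=
  if A ⊆ A' ∧ (A' \ A).card = 1 then
    β * x A * ∑ C ∈ univ.filter (fun C => A' ⊆ C), x C / ((C \ A).card : ℝ)
  else 0

/-- Swap rate `μ_{A,B}(x)`: nonzero only when `A ≁ B` (neither contains the other). -/
noncomputable def mu {ι : Type*} [DecidableEq ι]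
    (γ : ℝ) (x : Finset ι → ℝ) (A B : Finset ι) : ℝ :=
  if ¬ A ⊆ B ∧ ¬ B ⊆ A then
    γ * x A * x B / (((A \ B).card : ℝ) * ((B \ A).card : ℝ))
  else 0

/-- The indicator `D(A,A',B,B') = 1(A ⊏ A', A'\A ⊆ B, B ⊏ B', B'\B ⊆ A)`. -/
def Dind {ι : Type*} [DecidableEq ι] (A A' B B' : Finset ι) : ℝ :=
  if A ⊆ A' ∧ (A' \ A).card = 1 ∧ A' \ A ⊆ B ∧ B ⊆ B' ∧ (B' \ B).card = 1 ∧ B' \ B ⊆ A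
  then 1 else 0

namespace Finset

variable {ι : Type*} [DecidableEq ι]

instance decidableRelCovBy : DecidableRel ((· ⋖ ·) : Finset ι → Finset ι → Prop) :=
  fun _ _ => decidable_of_iff _ covBy_iff_card_sdiff_eq_one.symm

theorem card_sdiff_erase_of_mem {G C : Finset ι} {a : ι} (haG : a ∈ G) (haC : a ∈ C) :
    #(C \ G.erase a) = #(C \ G) + 1 := by
  rw [sdiff_erase haC, card_insert_of_notMem (by simp [haG])]

variable [Fintype ι] {M : Type*} [AddCommMonoid M]

theorem sum_filter_covBy_eq_sum_compl (G : Finset ι) (f : Finset ι → M) :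
    ∑ A with G ⋖ A, f A = ∑ a ∈ Gᶜ, f (insert a G) := by
  have himage : Gᶜ.image (insert · G) = univ.filter (G ⋖ ·) := by
    ext A; simp [covBy_iff_exists_insert]
  rw [← himage, sum_image]
  intro a ha b _ hab
  exact (insert_inj (mem_compl.1 ha)).1 hab

theorem sum_filter_covBy_eq_sum_erase (G : Finset ι) (f : Finset ι → M) :
    ∑ A with A ⋖ G, f A = ∑ a ∈ G, f (G.erase a) := by
  have himage : G.image G.erase = univ.filter (· ⋖ G) := by
    ext A; simp [covBy_iff_exists_erase]
  rw [← himage, sum_image (erase_injOn G)]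

theorem card_filter_covBy_sdiff_subset (G B : Finset ι) :
    #{A | G ⋖ A ∧ A \ G ⊆ B} = #(B \ G) := by
  rw [← filter_filter, card_filter, sum_filter_covBy_eq_sum_compl, ← card_filter]
  congr 1
  ext a
  by_cases ha : a ∈ G <;> simp [ha, insert_subset_iff]

end Finset

section BitTorrent

variable {ι : Type*} [DecidableEq ι]

theorem Dind_eq_mul (A A' B B' : Finset ι) :
    Dind A A' B B' = (if A ⋖ A' ∧ A' \ A ⊆ B then 1 else 0) *
      (if B ⋖ B' ∧ B' \ B ⊆ A then 1 else 0) := by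
  rw [ite_zero_mul_ite_zero, mul_one]
  simp only [Dind, covBy_iff_card_sdiff_eq_one, and_assoc]

theorem mu_mul_card_sdiff_mul_card_sdiff (γ : ℝ) (x : Finset ι → ℝ) (A B : Finset ι) :
    mu γ x A B * (#(A \ B) * #(B \ A)) = if ¬A ⊆ B ∧ ¬B ⊆ A then γ * x A * x B else 0 := by
  unfold mu
  split_ifs with h
  · have hAB : (#(A \ B) : ℝ) ≠ 0 := by simpa [sdiff_eq_empty_iff_subset] using h.1
    have hBA : (#(B \ A) : ℝ) ≠ 0 := by simpa [sdiff_eq_empty_iff_subset] using h.2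
    field_simp
  · rw [zero_mul]

theorem mu_erase_mul_card_sdiff (γ : ℝ) (x : Finset ι → ℝ) {G B : Finset ι} {a : ι}
    (haG : a ∈ G) (haB : a ∈ B) :
    mu γ x (G.erase a) B * #(G.erase a \ B) =
      if G ⊆ B then 0 else γ * x (G.erase a) * x B / (1 + #(B \ G)) := by
  have hsdiff : G.erase a \ B = G \ B := by
    rw [erase_sdiff_comm, erase_eq_of_notMem (s := G \ B) (by simp [haB])]
  have hnot : ¬B ⊆ G.erase a := fun h => notMem_erase a G (h haB)
  simp only [mu, erase_subset_iff_of_mem haB, hsdiff, card_sdiff_erase_of_mem haG haB, hnot,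
    not_false_eq_true, and_true]
  split_ifs with h
  · rw [zero_mul]
  · have hGB : (#(G \ B) : ℝ) ≠ 0 := by simpa [sdiff_eq_empty_iff_subset] using h
    push_cast
    field_simp
    ring

variable [Fintype ι]

theorem lam_eq_ite_covBy (β : ℝ) (x : Finset ι → ℝ) (A A' : Finset ι) :
    lam β x A A' = if A ⋖ A' then β * x A * ∑ C with A' ⊆ C, x C / #(C \ A) else 0 := by
  simp only [lam, covBy_iff_card_sdiff_eq_one]

theorem sum_Dind_right (A A' B : Finset ι) :
    ∑ B', Dind A A' B B' = (if A ⋖ A' ∧ A' \ A ⊆ B then 1 else 0) * #(A \ B) := by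
  simp only [Dind_eq_mul, ← mul_sum, sum_boole, card_filter_covBy_sdiff_subset]

theorem sum_sum_Dind (A B : Finset ι) :
    ∑ A', ∑ B', Dind A A' B B' = #(A \ B) * #(B \ A) := by
  simp only [sum_Dind_right]
  rw [← sum_mul, sum_boole, card_filter_covBy_sdiff_subset, mul_comm]

theorem sum_lam_outflow (β : ℝ) (x : Finset ι → ℝ) (G : Finset ι) :
    ∑ A', lam β x G A' = β * x G * ∑ B with G ⊂ B, x B := by
  simp only [lam_eq_ite_covBy, ← sum_filter, sum_filter_covBy_eq_sum_compl, ← mul_sum]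
  congr 1
  rw [sum_comm' (t' := {C | G ⊂ C}) (s' := fun C => C \ G)]
  · refine sum_congr rfl fun C hC => ?_
    have hGC : (#(C \ G) : ℝ) ≠ 0 := by
      simpa [sdiff_eq_empty_iff_subset] using (mem_filter.1 hC).2.not_superset
    rw [sum_const, nsmul_eq_mul, mul_div_cancel₀ _ hGC]
  · intro a C
    simp only [mem_compl, mem_filter, mem_univ, true_and, insert_subset_iff, mem_sdiff]
    constructor
    · rintro ⟨haG, haC, hGC⟩
      exact ⟨⟨haC, haG⟩, (ssubset_iff_of_subset hGC).2 ⟨a, haC, haG⟩⟩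
    · rintro ⟨⟨haC, haG⟩, hGC⟩
      exact ⟨haG, haC, hGC.subset⟩

theorem sum_lam_inflow (β : ℝ) (x : Finset ι → ℝ) (G : Finset ι) :
    ∑ A, lam β x A G =
      β * ∑ B with G ⊆ B, (∑ a ∈ G, x (G.erase a)) * x B / (1 + #(B \ G)) := by
  simp only [lam_eq_ite_covBy, ← sum_filter, sum_filter_covBy_eq_sum_erase]
  simp only [sum_mul, sum_div, mul_sum]
  rw [sum_comm]
  refine sum_congr rfl fun C hC => sum_congr rfl fun a ha => ?_
  rw [card_sdiff_erase_of_mem ha ((mem_filter.1 hC).2 ha)]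
  push_cast
  ring

theorem sum_mu_Dind_outflow (γ : ℝ) (x : Finset ι → ℝ) (G : Finset ι) :
    ∑ A', ∑ B, ∑ B', mu γ x G B * Dind G A' B B' =
      γ * x G * ∑ B with ¬G ⊆ B ∧ ¬B ⊆ G, x B := by
  rw [sum_comm]
  simp only [← mul_sum, sum_sum_Dind, mu_mul_card_sdiff_mul_card_sdiff]
  rw [sum_filter, mul_sum]
  simp only [mul_ite, mul_zero]

theorem sum_mu_Dind_inflow (γ : ℝ) (x : Finset ι → ℝ) (G : Finset ι) :
    ∑ A, ∑ B, ∑ B', mu γ x A B * Dind A G B B' =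
      γ * ∑ B with ¬G ⊆ B, (∑ a ∈ G ∩ B, x (G.erase a)) * x B / (1 + #(B \ G)) := by
  simp only [← mul_sum, sum_Dind_right]
  rw [← sum_filter_of_ne (p := (· ⋖ G)) fun A _ hA => by_contra fun h => hA (by simp [h]),
    sum_filter_covBy_eq_sum_erase]
  have hterm : ∀ a ∈ G, ∀ B, mu γ x (G.erase a) B *
      ((if G.erase a ⋖ G ∧ G \ G.erase a ⊆ B then 1 else 0) * #(G.erase a \ B)) =
        if a ∈ B ∧ ¬G ⊆ B then γ * x (G.erase a) * x B / (1 + #(B \ G)) else 0 := by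
    intro a ha B
    by_cases haB : a ∈ B
    · simp [erase_covBy ha, sdiff_erase_self ha, haB, mu_erase_mul_card_sdiff γ x ha haB]
    · simp [sdiff_erase_self ha, haB]
  rw [sum_congr rfl fun a ha => sum_congr rfl fun B _ => hterm a ha B, sum_comm, sum_filter,
    mul_sum]
  refine sum_congr rfl fun B _ => ?_
  by_cases hGB : G ⊆ B
  · simp [hGB]
  · simp only [hGB, not_false_eq_true, and_true, if_true, sum_ite_mem, sum_mul, sum_div, mul_sum]
    refine sum_congr rfl fun a _ => ?_
    ring

end BitTorrent

theorem drift_eq_vfield_general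
    {ι : Type*} [Fintype ι] [DecidableEq ι]
    (α : Finset ι → ℝ)
    (β γ δ : ℝ)
    (x : Finset ι → ℝ) (G : Finset ι) :
    α G - δ * x univ * (if G = univ then 1 else 0)
      - (∑ A' : Finset ι, lam β x G A')
      + (∑ A : Finset ι, lam β x A G)
      - (∑ A' : Finset ι, ∑ B : Finset ι, ∑ B' : Finset ι, mu γ x G B * Dind G A' B B')
      + (∑ A : Finset ι, ∑ B : Finset ι, ∑ B' : Finset ι, mu γ x A B * Dind A G B B')
      = vfield α β γ δ x G := by
  rw [sum_lam_outflow, sum_lam_inflow, sum_mu_Dind_outflow, sum_mu_Dind_inflow, vfield]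
  ring

/-- The drift of the BitTorrent Markov chain equals the fluid vector field. -/
theorem drift_eq_vfield
    {ι : Type*} [Fintype ι] [Nonempty ι] [DecidableEq ι]
    (α : Finset ι → ℝ) (hα : ∀ A, 0 ≤ α A)
    (β γ δ : ℝ) (hβ : 0 < β) (hγ : 0 ≤ γ) (hδ : 0 ≤ δ)
    (x : Finset ι → ℝ) (G : Finset ι) :
    α G - δ * x univ * (if G = univ then 1 else 0)
      - (∑ A' : Finset ι, lam β x G A')
      + (∑ A : Finset ι, lam β x A G)
      - (∑ A' : Finset ι, ∑ B : Finset ι, ∑ B' : Finset ι, mu γ x G B * Dind G A' B B')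
      + (∑ A : Finset ι, ∑ B : Finset ι, ∑ B' : Finset ι, mu γ x A B * Dind A G B B')
      = vfield α β γ δ x G :=
  drift_eq_vfield_general α β γ δ x G
end

section
/- Let β > 0 and suppose x, u, w : [0,∞) → ℝ are differentiable with x'(t) = −β x(t)(u(t) + w(t)), u'(t) = −β u(t) w(t) + β x(t)(u(t) + w(t)), w'(t) = β u(t) w(t) for all t ≥ 0, and with initial values x(0) = x₀ ≥ 0, u(0) = u₀ ≥ 0, w(0) = w₀ > 0 satisfying x₀ + u₀ + w₀ = 1. Then for all t ≥ 0, w(t) = (x₀ + (1 − x₀) e^{βt}) / (x₀ + (1 − x₀) e^{βt} + x₀ β t + (1 − w₀)/w₀), and consequently w(t) → 1 as t → ∞. -/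
/-!
Let `D(t) = x₀ + (1 - x₀) e^{βt}` and `M(t) = D(t) + x₀ β t + (1 - w₀)/w₀`, so that
`D' = β (D - x₀)` and `M' = β D`. Each of `x + u + w - 1`, `x D - x₀` and `w M - D` vanishes at
`0` and satisfies a linear equation `G' = c G` (with `c = 0`, `β x` and `β u` respectively), hence
vanishes identically by Grönwall's inequality. Thus `w = D / M`, and after multiplication by
`e^{-βt}` both `D` and `M` tend to `1 - x₀ > 0`.
-/

open Filter Set Real Topology

theorem eq_zero_of_hasDerivAt_eq_smul_self {E : Type*} [NormedAddCommGroup E] [NormedSpace ℝ E]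
    {c : ℝ → ℝ} {G : ℝ → E} {a : ℝ} (hc : ContinuousOn c (Ici a))
    (hG : ∀ t, a ≤ t → HasDerivAt G (c t • G t) t) (ha : G a = 0) :
    ∀ t, a ≤ t → G t = 0 := by
  intro b hb
  obtain ⟨K, hK⟩ := isCompact_Icc.exists_bound_of_continuousOn (hc.mono Icc_subset_Ici_self)
  refine eq_zero_of_abs_deriv_le_mul_abs_self_of_eq_zero_right (K := K)
    (fun t ht => (hG t ht.1).continuousAt.continuousWithinAt)
    (fun t ht => (hG t ht.1).hasDerivWithinAt) ha (fun t ht => ?_) b ⟨hb, le_rfl⟩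
  rw [norm_smul]
  exact mul_le_mul_of_nonneg_right (hK t (Ico_subset_Icc_self ht)) (norm_nonneg _)

namespace TwoChunk

structure IsSolution (β : ℝ) (x u w : ℝ → ℝ) : Prop where
  hasDerivAt_x : ∀ t, 0 ≤ t → HasDerivAt x (-β * x t * (u t + w t)) t
  hasDerivAt_u : ∀ t, 0 ≤ t → HasDerivAt u (-β * u t * w t + β * x t * (u t + w t)) t
  hasDerivAt_w : ∀ t, 0 ≤ t → HasDerivAt w (β * u t * w t) t

noncomputable def numerator (β x₀ t : ℝ) : ℝ := x₀ + (1 - x₀) * exp (β * t)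

noncomputable def denominator (β x₀ w₀ t : ℝ) : ℝ := numerator β x₀ t + x₀ * β * t + (1 - w₀) / w₀

theorem hasDerivAt_numerator (β x₀ t : ℝ) :
    HasDerivAt (numerator β x₀) (β * (numerator β x₀ t - x₀)) t := by
  have := (((hasDerivAt_id t).const_mul β).exp.const_mul (1 - x₀)).const_add x₀
  exact this.congr_deriv (by simp only [numerator, id]; ring)

theorem hasDerivAt_denominator (β x₀ w₀ t : ℝ) :
    HasDerivAt (denominator β x₀ w₀) (β * numerator β x₀ t) t := by
  have := (((hasDerivAt_numerator β x₀ t).add ((hasDerivAt_id t).const_mul (x₀ * β))).add_const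
    ((1 - w₀) / w₀))
  exact this.congr_deriv (by ring)

theorem one_le_numerator {β x₀ t : ℝ} (hβ : 0 ≤ β) (hx₀ : x₀ ≤ 1) (ht : 0 ≤ t) :
    1 ≤ numerator β x₀ t := by
  have : 1 ≤ exp (β * t) := one_le_exp (mul_nonneg hβ ht)
  unfold numerator
  nlinarith

theorem denominator_pos {β x₀ w₀ t : ℝ} (hβ : 0 ≤ β) (hx₀ : 0 ≤ x₀) (hx₀' : x₀ ≤ 1)
    (hw₀ : 0 < w₀) (ht : 0 ≤ t) : 0 < denominator β x₀ w₀ t := by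
  have h1 := one_le_numerator hβ hx₀' ht
  have h2 : 0 ≤ x₀ * β * t := by positivity
  have h3 : 1 + (1 - w₀) / w₀ = 1 / w₀ := by field_simp; ring
  have h4 : 0 < 1 / w₀ := one_div_pos.mpr hw₀
  unfold denominator
  linarith

theorem tendsto_numerator_mul_exp_neg {β : ℝ} (hβ : 0 < β) (x₀ : ℝ) :
    Tendsto (fun t => numerator β x₀ t * exp (-β * t)) atTop (𝓝 (1 - x₀)) := by
  have hexp : Tendsto (fun t => exp (-β * t)) atTop (𝓝 0) := by
    simpa using tendsto_rpow_mul_exp_neg_mul_atTop_nhds_zero 0 β hβ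
  have h := (hexp.const_mul x₀).const_add (1 - x₀)
  rw [mul_zero, add_zero] at h
  refine h.congr fun t => ?_
  have : exp (β * t) * exp (-β * t) = 1 := by rw [← exp_add]; simp
  unfold numerator
  linear_combination (-(1 - x₀)) * this

theorem tendsto_denominator_mul_exp_neg {β : ℝ} (hβ : 0 < β) (x₀ w₀ : ℝ) :
    Tendsto (fun t => denominator β x₀ w₀ t * exp (-β * t)) atTop (𝓝 (1 - x₀)) := by
  have hexp : Tendsto (fun t => exp (-β * t)) atTop (𝓝 0) := by
    simpa using tendsto_rpow_mul_exp_neg_mul_atTop_nhds_zero 0 β hβ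
  have hmul : Tendsto (fun t => t * exp (-β * t)) atTop (𝓝 0) := by
    simpa using tendsto_rpow_mul_exp_neg_mul_atTop_nhds_zero 1 β hβ
  have h := ((tendsto_numerator_mul_exp_neg hβ x₀).add (hmul.const_mul (x₀ * β))).add
    (hexp.const_mul ((1 - w₀) / w₀))
  rw [mul_zero, mul_zero, add_zero, add_zero] at h
  refine h.congr fun t => ?_
  unfold denominator
  ring

theorem tendsto_numerator_div_denominator {β x₀ : ℝ} (hβ : 0 < β) (hx₀ : x₀ ≠ 1) (w₀ : ℝ) :
    Tendsto (fun t => numerator β x₀ t / denominator β x₀ w₀ t) atTop (𝓝 1) := by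
  have h := (tendsto_numerator_mul_exp_neg hβ x₀).div (tendsto_denominator_mul_exp_neg hβ x₀ w₀)
    (sub_ne_zero.mpr hx₀.symm)
  rw [div_self (sub_ne_zero.mpr hx₀.symm)] at h
  exact h.congr fun t => mul_div_mul_right _ _ (exp_ne_zero _)

namespace IsSolution

variable {β : ℝ} {x u w : ℝ → ℝ}

theorem add_add_eq (h : IsSolution β x u w) {t : ℝ} (ht : 0 ≤ t) :
    x t + u t + w t = x 0 + u 0 + w 0 := by
  refine sub_eq_zero.mp <| eq_zero_of_hasDerivAt_eq_smul_self (c := fun _ => 0)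
    (G := fun t => x t + u t + w t - (x 0 + u 0 + w 0)) continuousOn_const (fun t ht => ?_)
    (sub_self _) t ht
  refine (((h.hasDerivAt_x t ht).add (h.hasDerivAt_u t ht)).add
    (h.hasDerivAt_w t ht)).sub_const _ |>.congr_deriv ?_
  rw [zero_smul]
  ring

theorem mul_numerator_eq (h : IsSolution β x u w) (hmass : x 0 + u 0 + w 0 = 1) {t : ℝ}
    (ht : 0 ≤ t) : x t * numerator β (x 0) t = x 0 := by
  refine sub_eq_zero.mp <| eq_zero_of_hasDerivAt_eq_smul_self (c := fun t => β * x t)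
    (G := fun t => x t * numerator β (x 0) t - x 0)
    (fun t ht => ((h.hasDerivAt_x t ht).continuousAt.continuousWithinAt).const_mul β)
    (fun t ht => ?_) (by simp [numerator]) t ht
  refine ((h.hasDerivAt_x t ht).mul (hasDerivAt_numerator β (x 0) t)).sub_const _
    |>.congr_deriv ?_
  have hmass_t := h.add_add_eq ht
  rw [smul_eq_mul]
  linear_combination (-β * x t * numerator β (x 0) t) * (hmass_t.trans hmass)

theorem mul_denominator_eq (h : IsSolution β x u w) (hmass : x 0 + u 0 + w 0 = 1)
    (hw₀ : w 0 ≠ 0) {t : ℝ} (ht : 0 ≤ t) :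
    w t * denominator β (x 0) (w 0) t = numerator β (x 0) t := by
  refine sub_eq_zero.mp <| eq_zero_of_hasDerivAt_eq_smul_self (c := fun t => β * u t)
    (G := fun t => w t * denominator β (x 0) (w 0) t - numerator β (x 0) t)
    (fun t ht => ((h.hasDerivAt_u t ht).continuousAt.continuousWithinAt).const_mul β)
    (fun t ht => ?_) (by
      simp only [denominator, numerator, mul_zero, exp_zero, mul_one, add_sub_cancel, add_zero]
      field_simp
      ring) t ht
  refine ((h.hasDerivAt_w t ht).mul (hasDerivAt_denominator β (x 0) (w 0) t)).sub
    (hasDerivAt_numerator β (x 0) t) |>.congr_deriv ?_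
  have hmass_t := h.add_add_eq ht
  have hxN := h.mul_numerator_eq hmass ht
  rw [smul_eq_mul]
  linear_combination (β * numerator β (x 0) t) * (hmass_t.trans hmass) - β * hxN

end IsSolution

end TwoChunk

/-- In the closed conservative two-chunk fluid model with `γ = 0` (variables
`x` = no chunk, `u` = one chunk, `w` = both chunks, total mass 1), the mass of
complete peers is `w(t) = (x₀ + (1−x₀)e^{βt})/(x₀ + (1−x₀)e^{βt} + x₀βt + (1−w₀)/w₀)`
and `w(t) → 1` as `t → ∞`. -/
theorem two_chunk_conservative_solution
    (β : ℝ) (hβ : 0 < β)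
    (x u w : ℝ → ℝ)
    (x₀ u₀ w₀ : ℝ) (hx₀ : 0 ≤ x₀) (hu₀ : 0 ≤ u₀) (hw₀ : 0 < w₀)
    (hsum : x₀ + u₀ + w₀ = 1)
    (h0x : x 0 = x₀) (h0u : u 0 = u₀) (h0w : w 0 = w₀)
    (hx : ∀ t : ℝ, 0 ≤ t → HasDerivAt x (-β * x t * (u t + w t)) t)
    (hu : ∀ t : ℝ, 0 ≤ t → HasDerivAt u (-β * u t * w t + β * x t * (u t + w t)) t)
    (hw : ∀ t : ℝ, 0 ≤ t → HasDerivAt w (β * u t * w t) t) :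
    (∀ t : ℝ, 0 ≤ t →
      w t = (x₀ + (1 - x₀) * Real.exp (β * t))
          / (x₀ + (1 - x₀) * Real.exp (β * t) + x₀ * β * t + (1 - w₀) / w₀)) ∧
    Tendsto w atTop (nhds 1) := by
  have h : TwoChunk.IsSolution β x u w := ⟨hx, hu, hw⟩
  subst h0x h0u h0w
  have hx₀_lt : x 0 < 1 := by linarith
  have hformula (t : ℝ) (ht : 0 ≤ t) :
      w t = TwoChunk.numerator β (x 0) t / TwoChunk.denominator β (x 0) (w 0) t :=
    (eq_div_iff (TwoChunk.denominator_pos hβ.le hx₀ hx₀_lt.le hw₀ ht).ne').mpr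
      (h.mul_denominator_eq hsum hw₀.ne' ht)
  refine ⟨hformula, ?_⟩
  exact (TwoChunk.tendsto_numerator_div_denominator hβ hx₀_lt.ne (w 0)).congr'
    ((eventually_ge_atTop 0).mono fun t ht => (hformula t ht).symm)
end

section
/- Let λ, δ, β̃, γ̃ > 0. There exists a unique u > 0 satisfying q(u) = 0, where q(u) = u² + (2β̃λ/(γ̃δ))u − 2λ/γ̃; moreover, for this u the point (x^∅, x^1, x^2, x^{12}) = ((δ/β̃)(δu/λ + 1)^{−1}, u/2, u/2, λ/δ) is a common zero of v^∅, v^1, v^2, v^{12}, i.e., it is an equilibrium of the two-chunk fluid system. -/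
/-!
The product of the two roots of `q` is `-2λ/γ̃ < 0`, so `q` has exactly one positive root.
At the proposed point the departures `δ x¹²` balance the arrivals `λ`, and `x^∅` is chosen so
that the download flow `β̃ x^∅ (x¹ + x² + x¹²)` out of the empty class is again `λ`. Multiplied
by `γ̃/2`, the equation `q(u) = 0` says that the flow `β̃ u λ/δ + γ̃ u²/2` into the class of
complete peers is `λ` as well, and every component of the vector field vanishes.
-/

theorem existsUnique_pos_quadratic_root (b : ℝ) {c : ℝ} (hc : 0 < c) :
    ∃! u : ℝ, 0 < u ∧ u ^ 2 + b * u - c = 0 := by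
  set s := √(b ^ 2 + 4 * c)
  have hs : s ^ 2 = b ^ 2 + 4 * c := Real.sq_sqrt (by positivity)
  have hbs : b < s := by nlinarith [Real.sqrt_nonneg (b ^ 2 + 4 * c)]
  refine ⟨(s - b) / 2, ⟨by linarith, by linear_combination hs / 4⟩, ?_⟩
  rintro v ⟨hv, hqv⟩
  have hfac : (v - (s - b) / 2) * (v + (s - b) / 2 + b) = 0 := by
    linear_combination hqv - hs / 4
  rcases mul_eq_zero.1 hfac with h | h
  · linarith
  · -- a second root `w` with `v + w = -b` would have `v * w = -c < 0`
    nlinarith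

theorem download_flow_eq_arrival_rate {lam δ β u : ℝ} (hlam : 0 < lam) (hδ : 0 < δ)
    (hβ : β ≠ 0) (hu : 0 ≤ u) :
    β * ((δ / β) * (δ * u / lam + 1)⁻¹) * (u + lam / δ) = lam := by
  have hden : δ * u / lam + 1 ≠ 0 := by positivity
  field_simp

theorem swap_flow_eq_arrival_rate {lam δ β γ u : ℝ} (hδ : δ ≠ 0) (hγ : γ ≠ 0)
    (hq : u ^ 2 + (2 * β * lam / (γ * δ)) * u - 2 * lam / γ = 0) :
    β * u * (lam / δ) + γ * u ^ 2 / 2 = lam := by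
  field_simp at hq ⊢
  linear_combination hq

/-- The open two-chunk fluid model (download rate `β̃`, swap rate `γ̃`, departure rate
`δ`, arrival rate `λ` of empty peers) has a unique `u > 0` with
`q(u) = u² + (2β̃λ/(γ̃δ))u − 2λ/γ̃ = 0`, and for this `u` the point
`((δ/β̃)(δu/λ+1)⁻¹, u/2, u/2, λ/δ)` is an equilibrium. -/
theorem two_chunk_open_equilibrium
    (lam δ βt γt : ℝ) (hlam : 0 < lam) (hδ : 0 < δ) (hβt : 0 < βt) (hγt : 0 < γt) :
    (∃! u : ℝ, 0 < u ∧ u ^ 2 + (2 * βt * lam / (γt * δ)) * u - 2 * lam / γt = 0) ∧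
    (∀ u : ℝ, 0 < u → u ^ 2 + (2 * βt * lam / (γt * δ)) * u - 2 * lam / γt = 0 →
      (lam - βt * ((δ / βt) * (δ * u / lam + 1)⁻¹) * (u / 2 + u / 2 + lam / δ) = 0 ∧
       -(u / 2) * (βt * (lam / δ) + γt * (u / 2))
          + βt * ((δ / βt) * (δ * u / lam + 1)⁻¹) * (u / 2 + (lam / δ) / 2) = 0 ∧
       -(u / 2) * (βt * (lam / δ) + γt * (u / 2))
          + βt * ((δ / βt) * (δ * u / lam + 1)⁻¹) * (u / 2 + (lam / δ) / 2) = 0 ∧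
       βt * (u / 2 + u / 2) * (lam / δ) + 2 * γt * (u / 2) * (u / 2)
          - δ * (lam / δ) = 0)) := by
  refine ⟨existsUnique_pos_quadratic_root _ (by positivity), fun u hu hq => ?_⟩
  have hdownload := download_flow_eq_arrival_rate hlam hδ hβt.ne' hu.le
  have hswap := swap_flow_eq_arrival_rate hδ.ne' hγt.ne' hq
  have hdeparture : δ * (lam / δ) = lam := mul_div_cancel₀ lam hδ.ne'
  refine ⟨?_, ?_, ?_, ?_⟩
  · linear_combination -hdownload
  · linear_combination (hdownload - hswap) / 2
  · linear_combination (hdownload - hswap) / 2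
  · linear_combination hswap - hdeparture
end

section
/- Let λ, δ, β, β̃, γ̃ > 0 with β̃ > β. Let u be the unique positive root of q(u) = u² + (2β̃λ/(γ̃δ))u − 2λ/γ̃ and let ũ be the unique positive root of q̃(v) = v² − (δ/β − λ/δ)v − (λ/β − λ/β̃) (which exists and is unique since q̃(0) < 0). Set |x*| = δ/β + λ/δ and |x̃*| = (δ/β̃)(δu/λ + 1)^{−1} + u + λ/δ. Then |x*| > |x̃*| if and only if q̃(u) < 0, which holds if and only if u < ũ. -/
/-!
The mass difference `|x*| - |x̃*|` equals `-q̃(u) · δ / (δu + λ)`, so its sign is that of `-q̃(u)`.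
Since `β < β̃`, the constant term of the monic quadratic `q̃` is negative, so its roots have opposite
signs, and on `[0, ∞)` it is negative exactly to the left of its positive root `ũ`.
-/

section MonicQuadratic

variable {b c r : ℝ}

theorem sq_sub_mul_sub_eq_mul_of_root (hr : r ^ 2 - b * r - c = 0) (v : ℝ) :
    v ^ 2 - b * v - c = (v - r) * (v + r - b) := by
  linear_combination hr

/-- `b - r` is the other root, negative since the product of the roots is `-c`. -/
theorem sub_pos_of_root (hc : 0 < c) (hr₀ : 0 < r) (hr : r ^ 2 - b * r - c = 0) : 0 < r - b :=
  have hprod : r * (r - b) = c := by linear_combination hr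
  pos_of_mul_pos_right (hprod ▸ hc) hr₀.le

theorem sq_sub_mul_sub_neg_iff_lt_root (hc : 0 < c) (hr₀ : 0 < r) (hr : r ^ 2 - b * r - c = 0)
    {v : ℝ} (hv : 0 ≤ v) : v ^ 2 - b * v - c < 0 ↔ v < r := by
  have hfactor : 0 < v + r - b := by linarith [sub_pos_of_root hc hr₀ hr]
  rw [sq_sub_mul_sub_eq_mul_of_root hr, ← neg_pos, ← neg_mul, mul_pos_iff_of_pos_right hfactor,
    neg_pos, sub_neg]

theorem existsUnique_pos_root (hc : 0 < c) (hr₀ : 0 < r) (hr : r ^ 2 - b * r - c = 0) :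
    ∃! v : ℝ, 0 < v ∧ v ^ 2 - b * v - c = 0 := by
  refine ⟨r, ⟨hr₀, hr⟩, fun v ⟨hv₀, hv⟩ => ?_⟩
  have hfactor : 0 < v + r - b := by linarith [sub_pos_of_root hc hr₀ hr]
  rw [sq_sub_mul_sub_eq_mul_of_root hr] at hv
  exact sub_eq_zero.mp ((mul_eq_zero.mp hv).resolve_right hfactor.ne')

end MonicQuadratic

section EquilibriumMass

variable {lam δ β βt u : ℝ}

theorem equilibriumMass_sub_eq (hlam : lam ≠ 0) (hδ : δ ≠ 0) (hβ : β ≠ 0) (hβt : βt ≠ 0)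
    (hden : δ * u + lam ≠ 0) :
    δ / β + lam / δ - ((δ / βt) * (δ * u / lam + 1)⁻¹ + u + lam / δ)
      = -(u ^ 2 - (δ / β - lam / δ) * u - (lam / β - lam / βt)) * (δ / (δ * u + lam)) := by
  have hinv : (δ * u / lam + 1)⁻¹ = lam / (δ * u + lam) := by
    rw [div_add_one hlam, inv_div]
  rw [hinv]
  field_simp
  ring

theorem equilibriumMass_lt_iff (hlam : 0 < lam) (hδ : 0 < δ) (hβ : β ≠ 0) (hβt : βt ≠ 0)
    (hu : 0 ≤ u) :
    (δ / βt) * (δ * u / lam + 1)⁻¹ + u + lam / δ < δ / β + lam / δ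
      ↔ u ^ 2 - (δ / β - lam / δ) * u - (lam / β - lam / βt) < 0 := by
  have hden : 0 < δ * u + lam := by positivity
  rw [← sub_pos, equilibriumMass_sub_eq hlam.ne' hδ.ne' hβ hβt hden.ne',
    mul_pos_iff_of_pos_right (by positivity), neg_pos]

end EquilibriumMass

theorem performance_comparison_general
    (lam δ β βt : ℝ) (hlam : 0 < lam) (hδ : 0 < δ) (hβ : 0 < β)
    (hββ : β < βt)
    (u : ℝ) (hu : 0 < u)
    (ut : ℝ) (hut : 0 < ut)
    (hqt : ut ^ 2 - (δ / β - lam / δ) * ut - (lam / β - lam / βt) = 0) :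
    (∃! v : ℝ, 0 < v ∧ v ^ 2 - (δ / β - lam / δ) * v - (lam / β - lam / βt) = 0) ∧
    (δ / β + lam / δ > (δ / βt) * (δ * u / lam + 1)⁻¹ + u + lam / δ
      ↔ u ^ 2 - (δ / β - lam / δ) * u - (lam / β - lam / βt) < 0) ∧
    (u ^ 2 - (δ / β - lam / δ) * u - (lam / β - lam / βt) < 0 ↔ u < ut) := by
  have hc : 0 < lam / β - lam / βt := sub_pos.mpr (div_lt_div_of_pos_left hlam hβ hββ)
  exact ⟨existsUnique_pos_root hc hut hqt,
    equilibriumMass_lt_iff hlam hδ hβ.ne' (hβ.trans hββ).ne' hu.le,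
    sq_sub_mul_sub_neg_iff_lt_root hc hut hqt hu.le⟩

/-- Comparison of total equilibrium masses of the single-chunk and two-chunk models:
with `u` the unique positive root of `q(u) = u² + (2β̃λ/(γ̃δ))u − 2λ/γ̃` and `ũ` the
unique positive root of `q̃(v) = v² − (δ/β − λ/δ)v − (λ/β − λ/β̃)` (which exists and is
unique since `q̃(0) < 0`), one has `|x*| > |x̃*| ↔ q̃(u) < 0 ↔ u < ũ`. -/
theorem performance_comparison
    (lam δ β βt γt : ℝ) (hlam : 0 < lam) (hδ : 0 < δ) (hβ : 0 < β)
    (hβt : 0 < βt) (hγt : 0 < γt) (hββ : β < βt)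
    (u : ℝ) (hu : 0 < u)
    (hq : u ^ 2 + (2 * βt * lam / (γt * δ)) * u - 2 * lam / γt = 0)
    (ut : ℝ) (hut : 0 < ut)
    (hqt : ut ^ 2 - (δ / β - lam / δ) * ut - (lam / β - lam / βt) = 0) :
    (∃! v : ℝ, 0 < v ∧ v ^ 2 - (δ / β - lam / δ) * v - (lam / β - lam / βt) = 0) ∧
    (δ / β + lam / δ > (δ / βt) * (δ * u / lam + 1)⁻¹ + u + lam / δ
      ↔ u ^ 2 - (δ / β - lam / δ) * u - (lam / β - lam / βt) < 0) ∧
    (u ^ 2 - (δ / β - lam / δ) * u - (lam / β - lam / βt) < 0 ↔ u < ut) :=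
  performance_comparison_general lam δ β βt hlam hδ hβ hββ u hu ut hut hqt
end

section
/- Fix β, δ, β̃, γ̃ > 0 with β̃ > β. For each λ > 0 let u(λ) be the unique positive root of q(u) = u² + (2β̃λ/(γ̃δ))u − 2λ/γ̃ and let ũ(λ) be the unique positive root of q̃(v) = v² − (δ/β − λ/δ)v − (λ/β − λ/β̃). Then there exists λ₀ > 0 such that u(λ) < ũ(λ) for all λ with 0 < λ < λ₀. -/
/-- For small enough arrival rate `λ`, splitting into two chunks improves performance:
there is `λ₀ > 0` such that for all `0 < λ < λ₀`, the unique positive root `u(λ)` of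
`q(u) = u² + (2β̃λ/(γ̃δ))u − 2λ/γ̃` is smaller than the unique positive root `ũ(λ)` of
`q̃(v) = v² − (δ/β − λ/δ)v − (λ/β − λ/β̃)`. -/
theorem small_arrival_rate_improvement
    (δ β βt γt : ℝ) (hδ : 0 < δ) (hβ : 0 < β) (hβt : 0 < βt) (hγt : 0 < γt)
    (hββ : β < βt) :
    ∃ lam₀ : ℝ, 0 < lam₀ ∧
      ∀ lam : ℝ, 0 < lam → lam < lam₀ →
        ∀ u ut : ℝ,
          0 < u → u ^ 2 + (2 * βt * lam / (γt * δ)) * u - 2 * lam / γt = 0 →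
          0 < ut → ut ^ 2 - (δ / β - lam / δ) * ut - (lam / β - lam / βt) = 0 →
          u < ut := by
  refine ⟨min (δ^2/(2*β)) (γt*δ^2/(8*β^2)), by positivity, ?_⟩
  intro lam hlam hlt u ut hu hq hut hqt
  have h1 : lam < δ^2/(2*β) := lt_of_lt_of_le hlt (min_le_left _ _)
  have h2 : lam < γt*δ^2/(8*β^2) := lt_of_lt_of_le hlt (min_le_right _ _)
  have hu2 : u^2 < δ^2/(4*β^2) := by
    have he : u^2 = 2*lam/γt - (2*βt*lam/(γt*δ))*u := by linarith [hq]
    have hpos : 0 < (2*βt*lam/(γt*δ))*u := by positivity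
    have h2' : lam * (8*β^2) < γt*δ^2 := by
      have := (lt_div_iff₀ (by positivity : (0:ℝ) < 8*β^2)).mp h2
      linarith
    have hlt2 : 2*lam/γt < δ^2/(4*β^2) := by
      rw [div_lt_div_iff₀ hγt (by positivity)]
      nlinarith
    linarith
  have hsq : (δ/(2*β))^2 = δ^2/(4*β^2) := by field_simp; ring
  have huu : u < δ/(2*β) := by
    nlinarith [div_pos hδ (by positivity : (0:ℝ) < 2*β)]
  have h1' : lam * (2*β) < δ^2 := (lt_div_iff₀ (by positivity : (0:ℝ) < 2*β)).mp h1
  have hld : lam/δ < δ/(2*β) := by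
    rw [div_lt_div_iff₀ hδ (by positivity)]
    nlinarith
  have hhalf : δ/β - δ/(2*β) = δ/(2*β) := by field_simp; ring
  have hc : δ/(2*β) < δ/β - lam/δ := by linarith
  have hd : 0 < lam/β - lam/βt := by
    rw [sub_pos, div_lt_div_iff₀ hβt hβ]
    nlinarith
  have hgt : (δ/β - lam/δ)*ut < ut^2 := by nlinarith
  have : δ/β - lam/δ < ut := by
    by_contra h
    push_neg at h
    nlinarith
  linarith
end
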